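/- arXiv:1306.3644 — 5 statements merged into one kernel-verified Lean document; each statement's English description precedes it below -/
import Mathlib

section
/- Assume that (i) F(u) ≥ 0 for every u ∈ H, (ii) F has a gradient ∇F : H → H at every point, and (iii) ⟨∇F(u), u⟩ ≥ 0 for every u ∈ H. Let 0 < T ≤ ∞ and let u : [0,T) → H be a twice continuously differentiable solution of u''(t) + u'(t) + A u(t) + ∇F(u(t)) = 0 on [0,T). Then for every t ∈ [0,T): ‖u'(t)‖² + ‖u(t)‖² + ⟨A u(t), u(t)⟩ + F(u(t)) ≤ 16 (‖u'(0)‖² + ‖u(0)‖² + ⟨A u(0), u(0)⟩ + F(u(0))). -/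
/-!
The perturbed energy `L(u, u') = ‖u'‖² + ⟨Au, u⟩ + 2F(u) + ⟨u, u'⟩ + ‖u‖²/2` decreases along
solutions: by the equation its derivative is `-(‖u'‖² + ⟨Au, u⟩ + ⟨∇F(u), u⟩) ≤ 0`. The cross
term `⟨u, u'⟩` is absorbed by the quadratic terms, so `L` is comparable to the energy
`E(u, u') = ‖u'‖² + ‖u‖² + ⟨Au, u⟩ + F(u)`, namely `E ≤ 8 L` and `L ≤ 2 E`, whence
`E(t) ≤ 8 L(t) ≤ 8 L(0) ≤ 16 E(0)`.
-/

open scoped RealInnerProductSpace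

theorem HasGradientAt.comp_hasDerivWithinAt {H : Type*} [NormedAddCommGroup H]
    [InnerProductSpace ℝ H] [CompleteSpace H] {F : H → ℝ} {F' : H → H} {γ : ℝ → H} {γ' : H}
    {s : Set ℝ} {t : ℝ} (hF : HasGradientAt F (F' (γ t)) (γ t))
    (hγ : HasDerivWithinAt γ γ' s t) :
    HasDerivWithinAt (fun r => F (γ r)) ⟪F' (γ t), γ'⟫ s t := by
  have := hF.hasFDerivAt.comp_hasDerivWithinAt t hγ
  simp only [InnerProductSpace.toDual_apply_apply] at this
  exact this

namespace DampedEvolution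

variable {H : Type*} [NormedAddCommGroup H] [InnerProductSpace ℝ H]
  (A : H →L[ℝ] H) (F : H → ℝ)

noncomputable def energy (u v : H) : ℝ := ‖v‖ ^ 2 + ‖u‖ ^ 2 + ⟪A u, u⟫ + F u

noncomputable def perturbedEnergy (u v : H) : ℝ :=
  ‖v‖ ^ 2 + ⟪A u, u⟫ + 2 * F u + ⟪u, v⟫ + ‖u‖ ^ 2 / 2

variable {A F}

theorem energy_le_eight_mul_perturbedEnergy {u v : H} (hAu : 0 ≤ ⟪A u, u⟫) (hFu : 0 ≤ F u) :
    energy A F u v ≤ 8 * perturbedEnergy A F u v := by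
  have hcross : -(‖u‖ * ‖v‖) ≤ ⟪u, v⟫ := neg_le_of_abs_le (abs_real_inner_le_norm u v)
  unfold energy perturbedEnergy
  nlinarith [sq_nonneg (3 * ‖u‖ - 4 * ‖v‖)]

theorem perturbedEnergy_le_two_mul_energy {u v : H} (hAu : 0 ≤ ⟪A u, u⟫) :
    perturbedEnergy A F u v ≤ 2 * energy A F u v := by
  have hcross : ⟪u, v⟫ ≤ ‖u‖ * ‖v‖ := real_inner_le_norm u v
  unfold energy perturbedEnergy
  nlinarith [sq_nonneg (‖u‖ - ‖v‖)]

variable [CompleteSpace H] {F' : H → H} {u v w : ℝ → H} {D : Set ℝ} {t : ℝ}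

theorem hasDerivWithinAt_perturbedEnergy (hA : IsSelfAdjoint A)
    (hF : HasGradientAt F (F' (u t)) (u t))
    (hu : HasDerivWithinAt u (v t) D t) (hv : HasDerivWithinAt v (w t) D t) :
    HasDerivWithinAt (fun s => perturbedEnergy A F (u s) (v s))
      (2 * ⟪v t, w t⟫ + 2 * ⟪A (u t), v t⟫ + 2 * ⟪F' (u t), v t⟫
        + ‖v t‖ ^ 2 + ⟪u t, w t⟫ + ⟪u t, v t⟫) D t := by
  have hAu : HasDerivWithinAt (fun s => A (u s)) (A (v t)) D t :=
    A.hasFDerivAt.comp_hasDerivWithinAt t hu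
  have hderiv := ((((hv.norm_sq.add (hAu.inner ℝ hu)).add
    ((hF.comp_hasDerivWithinAt hu).const_mul 2)).add (hu.inner ℝ hv)).add
    (hu.norm_sq.div_const 2))
  refine hderiv.congr_deriv ?_
  rw [hA.isSymmetric.apply_clm (v t) (u t), real_inner_comm (A (u t)) (v t),
    real_inner_comm (v t) (v t), real_inner_self_eq_norm_sq]
  ring

theorem hasDerivWithinAt_perturbedEnergy_of_solution (hA : IsSelfAdjoint A)
    (hF : HasGradientAt F (F' (u t)) (u t))
    (hu : HasDerivWithinAt u (v t) D t) (hv : HasDerivWithinAt v (w t) D t)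
    (heq : w t + v t + A (u t) + F' (u t) = 0) :
    HasDerivWithinAt (fun s => perturbedEnergy A F (u s) (v s))
      (-(‖v t‖ ^ 2 + ⟪A (u t), u t⟫ + ⟪F' (u t), u t⟫)) D t := by
  refine (hasDerivWithinAt_perturbedEnergy hA hF hu hv).congr_deriv ?_
  rw [eq_neg_of_add_eq_zero_left (by rw [← heq]; abel :
    w t + (v t + A (u t) + F' (u t)) = 0)]
  simp only [inner_neg_right, inner_add_right, real_inner_self_eq_norm_sq]
  rw [real_inner_comm (v t) (A (u t)), real_inner_comm (v t) (F' (u t)),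
    real_inner_comm (u t) (A (u t)), real_inner_comm (u t) (F' (u t))]
  ring

theorem antitoneOn_perturbedEnergy (hD : Convex ℝ D) (hA : IsSelfAdjoint A)
    (hApos : ∀ x : H, 0 ≤ ⟪A x, x⟫) (hF : ∀ x : H, HasGradientAt F (F' x) x)
    (hsign : ∀ x : H, 0 ≤ ⟪F' x, x⟫)
    (hu : ∀ t ∈ D, HasDerivWithinAt u (v t) D t) (hv : ∀ t ∈ D, HasDerivWithinAt v (w t) D t)
    (heq : ∀ t ∈ D, w t + v t + A (u t) + F' (u t) = 0) :
    AntitoneOn (fun s => perturbedEnergy A F (u s) (v s)) D := by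
  have hderiv := fun t (ht : t ∈ D) =>
    hasDerivWithinAt_perturbedEnergy_of_solution hA (hF (u t)) (hu t ht) (hv t ht) (heq t ht)
  refine antitoneOn_of_hasDerivWithinAt_nonpos hD (fun t ht => (hderiv t ht).continuousWithinAt)
    (fun t ht => (hderiv t (interior_subset ht)).mono interior_subset) fun t _ => ?_
  linarith [sq_nonneg ‖v t‖, hApos (u t), hsign (u t)]

end DampedEvolution

open DampedEvolution in
theorem stmt_2_general
    {H : Type*} [NormedAddCommGroup H] [InnerProductSpace ℝ H] [CompleteSpace H]
    (A : H →L[ℝ] H) (hA : IsSelfAdjoint A) (hApos : ∀ u : H, 0 ≤ ⟪A u, u⟫)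
    (F : H → ℝ) (F' : H → H)
    (hFpos : ∀ u : H, 0 ≤ F u)
    (hF : ∀ u : H, HasGradientAt F (F' u) u)
    (hsign : ∀ u : H, 0 ≤ ⟪F' u, u⟫)
    (D : Set ℝ)
    (hD : D = Set.Ici (0:ℝ) ∨ ∃ T : ℝ, 0 < T ∧ D = Set.Ico 0 T)
    (u v w : ℝ → H)
    (hu : ∀ t ∈ D, HasDerivWithinAt u (v t) D t)
    (hv : ∀ t ∈ D, HasDerivWithinAt v (w t) D t)
    (heq : ∀ t ∈ D, w t + v t + A (u t) + F' (u t) = 0) :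
    ∀ t ∈ D,
      ‖v t‖^2 + ‖u t‖^2 + ⟪A (u t), u t⟫ + F (u t) ≤
        16 * (‖v 0‖^2 + ‖u 0‖^2 + ⟪A (u 0), u 0⟫ + F (u 0)) := by
  obtain ⟨hDconv, h0D, hDnonneg⟩ : Convex ℝ D ∧ IsLeast D 0 := by
    rcases hD with rfl | ⟨T, hT, rfl⟩
    exacts [⟨convex_Ici 0, isLeast_Ici⟩, ⟨convex_Ico 0 T, isLeast_Ico hT⟩]
  have hanti := antitoneOn_perturbedEnergy hDconv hA hApos hF hsign hu hv heq
  intro t ht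
  calc energy A F (u t) (v t)
      ≤ 8 * perturbedEnergy A F (u t) (v t) :=
        energy_le_eight_mul_perturbedEnergy (hApos _) (hFpos _)
    _ ≤ 8 * perturbedEnergy A F (u 0) (v 0) := by gcongr; exact hanti h0D ht (hDnonneg ht)
    _ ≤ 16 * energy A F (u 0) (v 0) := by
        linarith [perturbedEnergy_le_two_mul_energy (F := F) (v := v 0) (hApos (u 0))]

/-- Basic a priori estimate: on an interval `[0,T)` (with `0 < T ≤ ∞`), every twice
continuously differentiable solution of `u'' + u' + A u + ∇F(u) = 0` satisfies
`‖u'(t)‖² + ‖u(t)‖² + ⟨Au(t),u(t)⟩ + F(u(t)) ≤ 16 (‖u'(0)‖² + ‖u(0)‖² + ⟨Au(0),u(0)⟩ + F(u(0)))`. -/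
theorem stmt_2
    {H : Type*} [NormedAddCommGroup H] [InnerProductSpace ℝ H] [CompleteSpace H]
    (A : H →L[ℝ] H) (hA : IsSelfAdjoint A) (hApos : ∀ u : H, 0 ≤ ⟪A u, u⟫)
    (F : H → ℝ) (F' : H → H)
    (hFpos : ∀ u : H, 0 ≤ F u)
    (hF : ∀ u : H, HasGradientAt F (F' u) u)
    (hsign : ∀ u : H, 0 ≤ ⟪F' u, u⟫)
    (D : Set ℝ)
    (hD : D = Set.Ici (0:ℝ) ∨ ∃ T : ℝ, 0 < T ∧ D = Set.Ico 0 T)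
    (u v w : ℝ → H)
    (hu : ∀ t ∈ D, HasDerivWithinAt u (v t) D t)
    (hv : ∀ t ∈ D, HasDerivWithinAt v (w t) D t)
    (hw : ContinuousOn w D)
    (heq : ∀ t ∈ D, w t + v t + A (u t) + F' (u t) = 0) :
    ∀ t ∈ D,
      ‖v t‖^2 + ‖u t‖^2 + ⟪A (u t), u t⟫ + F (u t) ≤
        16 * (‖v 0‖^2 + ‖u 0‖^2 + ⟪A (u 0), u 0⟫ + F (u 0)) :=
  stmt_2_general A hA hApos F F' hFpos hF hsign D hD u v w hu hv heq
end

section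
/- Assume that: F(u) ≥ 0 for every u ∈ H and F(0) = 0; F has a gradient ∇F : H → H at every point; ∇F is Lipschitz continuous on every bounded subset of H; there exists K > 0 such that ⟨∇F(u), u⟩ ≥ K · F(u) for every u ∈ H; and there exists p > 0 such that for every bounded set B ⊆ H there is a constant R ≥ 0 with ‖u‖^{p+2} ≤ R (⟨A u, u⟩ + F(u)) for every u ∈ B. Then for every twice continuously differentiable solution u : [0,∞) → H of u''(t) + u'(t) + A u(t) + ∇F(u(t)) = 0 there exist constants M₁ and M₂ such that for every t ≥ 0: ‖u'(t)‖² + ⟨A u(t), u(t)⟩ + F(u(t)) ≤ M₁ (1+t)^{-(1+2/p)} and ‖u(t)‖ ≤ M₂ (1+t)^{-1/p}. -/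
/-!
The energy `E = (‖u'‖² + ⟪A u, u⟫) / 2 + F u` satisfies `E' = -‖u'‖²`, and
`2 E + ⟪u', u⟫ + ‖u‖² / 2` is nonincreasing too, so the trajectory is bounded and the coercivity
hypothesis on a ball gives `‖u‖ ≤ c₁ E ^ (1 / (p + 2))`. With `α = p / (p + 2)`, the perturbed
energy `Φ = E + ε E ^ α ⟪u', u⟫` is comparable to `E` for small `ε > 0` and satisfies
`Φ' ≤ -c Φ ^ (1 + α)`, whence `E ≲ (1 + t) ^ (-1 / α) = (1 + t) ^ (-(1 + 2 / p))` and then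
`‖u‖ ≲ (1 + t) ^ (-1 / p)`. If `E` vanishes at some time, it vanishes from then on.
-/

open scoped RealInnerProductSpace NNReal
open Set

theorem monotoneOn_Ici_of_hasDerivWithinAt_nonneg {f f' : ℝ → ℝ} {a : ℝ}
    (hf : ∀ t ∈ Ici a, HasDerivWithinAt f (f' t) (Ici a) t) (hf' : ∀ t ∈ Ici a, 0 ≤ f' t) :
    MonotoneOn f (Ici a) :=
  monotoneOn_of_hasDerivWithinAt_nonneg (convex_Ici a) (fun t ht => (hf t ht).continuousWithinAt)
    (fun t ht => (hf t (interior_subset ht)).mono interior_subset)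
    fun t ht => hf' t (interior_subset ht)

theorem antitoneOn_Ici_of_hasDerivWithinAt_nonpos {f f' : ℝ → ℝ} {a : ℝ}
    (hf : ∀ t ∈ Ici a, HasDerivWithinAt f (f' t) (Ici a) t) (hf' : ∀ t ∈ Ici a, f' t ≤ 0) :
    AntitoneOn f (Ici a) :=
  antitoneOn_of_hasDerivWithinAt_nonpos (convex_Ici a) (fun t ht => (hf t ht).continuousWithinAt)
    (fun t ht => (hf t (interior_subset ht)).mono interior_subset)
    fun t ht => hf' t (interior_subset ht)

/-- Comparison with the solution of `φ' = -c φ ^ (1 + α)`: `φ ^ (-α) - α c t` is nondecreasing. -/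
theorem exists_le_mul_one_add_rpow_of_hasDerivWithinAt_le {φ φ' : ℝ → ℝ} {c α : ℝ}
    (hc : 0 < c) (hα : 0 < α) (hφ : ∀ t ∈ Ici (0 : ℝ), HasDerivWithinAt φ (φ' t) (Ici 0) t)
    (hpos : ∀ t ∈ Ici (0 : ℝ), 0 < φ t) (hle : ∀ t ∈ Ici (0 : ℝ), φ' t ≤ -(c * φ t ^ (1 + α))) :
    ∃ C, ∀ t ∈ Ici (0 : ℝ), φ t ≤ C * (1 + t) ^ (-α⁻¹) := by
  have hmono : MonotoneOn (fun t => φ t ^ (-α) - α * c * t) (Ici 0) := by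
    refine monotoneOn_Ici_of_hasDerivWithinAt_nonneg (fun t ht =>
      ((hφ t ht).rpow_const (Or.inl (hpos t ht).ne')).sub
        ((hasDerivWithinAt_id t _).const_mul (α * c))) fun t ht => ?_
    have key : φ' t * φ t ^ (-α - 1) ≤ -c :=
      calc φ' t * φ t ^ (-α - 1) ≤ -(c * φ t ^ (1 + α)) * φ t ^ (-α - 1) :=
            mul_le_mul_of_nonneg_right (hle t ht) (Real.rpow_nonneg (hpos t ht).le _)
        _ = -c := by rw [neg_mul, mul_assoc, ← Real.rpow_add (hpos t ht)]; ring_nf; simp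
    nlinarith
  set c₂ := min (φ 0 ^ (-α)) (α * c)
  have hc₂ : 0 < c₂ := lt_min (Real.rpow_pos_of_pos (hpos 0 self_mem_Ici) _) (by positivity)
  refine ⟨c₂ ^ (-α⁻¹), fun t (ht : 0 ≤ t) => ?_⟩
  have hlow : c₂ * (1 + t) ≤ φ t ^ (-α) := by
    have h := hmono self_mem_Ici ht ht
    have := mul_le_mul_of_nonneg_right (min_le_right (φ 0 ^ (-α)) (α * c)) ht
    simp only [mul_zero, sub_zero] at h
    nlinarith [min_le_left (φ 0 ^ (-α)) (α * c)]
  calc φ t = (φ t ^ (-α)) ^ (-α⁻¹) := by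
        rw [← Real.rpow_mul (hpos t ht).le, neg_mul_neg, mul_inv_cancel₀ hα.ne', Real.rpow_one]
    _ ≤ (c₂ * (1 + t)) ^ (-α⁻¹) :=
        Real.rpow_le_rpow_of_nonpos (by positivity) hlow (by simp [hα.le])
    _ = c₂ ^ (-α⁻¹) * (1 + t) ^ (-α⁻¹) := Real.mul_rpow hc₂.le (by positivity)

theorem AntitoneOn.exists_le_mul_one_add_rpow_of_nonpos {f : ℝ → ℝ} (hf : AntitoneOn f (Ici 0))
    {t₀ : ℝ} (ht₀ : 0 ≤ t₀) (hft₀ : f t₀ ≤ 0) {γ : ℝ} (hγ : 0 ≤ γ) :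
    ∃ C, ∀ t ∈ Ici (0 : ℝ), f t ≤ C * (1 + t) ^ (-γ) := by
  refine ⟨max (f 0) 0 * (1 + t₀) ^ γ, fun t (ht : 0 ≤ t) => ?_⟩
  rcases le_or_gt t t₀ with hle | hlt
  · have hscale : 1 ≤ (1 + t₀) ^ γ * (1 + t) ^ (-γ) := by
      rw [Real.rpow_neg (by positivity), ← div_eq_mul_inv, one_le_div (by positivity)]
      exact Real.rpow_le_rpow (by positivity) (by linarith) hγ
    calc f t ≤ max (f 0) 0 * 1 := by
          rw [mul_one]; exact (hf self_mem_Ici ht ht).trans (le_max_left _ _)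
      _ ≤ max (f 0) 0 * ((1 + t₀) ^ γ * (1 + t) ^ (-γ)) :=
          mul_le_mul_of_nonneg_left hscale (le_max_right _ _)
      _ = _ := by ring
  · calc f t ≤ f t₀ := hf ht₀ ht hlt.le
      _ ≤ 0 := hft₀
      _ ≤ _ := by positivity

theorem mul_le_div_mul_sq_add {a x z k : ℝ} (hk : 0 < k) :
    a * x * z ≤ a ^ 2 / k * x ^ 2 + k / 4 * z ^ 2 := by
  rw [div_mul_eq_mul_div, div_mul_eq_mul_div, div_add_div _ _ hk.ne' four_ne_zero,
    le_div_iff₀ (by positivity)]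
  nlinarith [sq_nonneg (2 * a * x - k * z)]

/-- The left-hand side is `Φ'` for `Φ = E + ε E ^ α ρ` when `E' = -x²` and `ρ' = x² - ρ - s`. -/
theorem perturbed_energy_deriv_le {α k ε c₁ B E E₀ x ρ s : ℝ} (hα : 0 < α) (hk : 0 < k)
    (hε : 0 ≤ ε) (hE : 0 < E) (hEE₀ : E ≤ E₀)
    (hρ : E ^ α * |ρ| ≤ c₁ * x * E ^ ((1 + α) / 2)) (hρE : E ^ α * |ρ| ≤ B * E)
    (hs : k * (E - x ^ 2 / 2) ≤ s)
    (hεB : ε * (α * B + E₀ ^ α + c₁ ^ 2 / k + k / 2 * E₀ ^ α) ≤ 1) :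
    -x ^ 2 + ε * (-x ^ 2 * α * E ^ (α - 1) * ρ + E ^ α * (x ^ 2 - ρ - s))
      ≤ -(ε * (3 * k / 4)) * E ^ (1 + α) := by
  have hEα : E ^ α ≤ E₀ ^ α := Real.rpow_le_rpow hE.le hEE₀ hα.le
  have hEα0 : 0 ≤ E ^ α := Real.rpow_nonneg hE.le α
  have hx2 : 0 ≤ x ^ 2 := sq_nonneg x
  have hdrift : -x ^ 2 * α * E ^ (α - 1) * ρ ≤ α * B * x ^ 2 :=
    calc -x ^ 2 * α * E ^ (α - 1) * ρ = α * x ^ 2 / E * E ^ α * (-ρ) := by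
          rw [Real.rpow_sub_one hE.ne']; ring
      _ ≤ α * x ^ 2 / E * E ^ α * |ρ| :=
          mul_le_mul_of_nonneg_left (neg_le_abs ρ) (by positivity)
      _ = α * x ^ 2 / E * (E ^ α * |ρ|) := mul_assoc _ _ _
      _ ≤ α * x ^ 2 / E * (B * E) := mul_le_mul_of_nonneg_left hρE (by positivity)
      _ = α * B * x ^ 2 := by field_simp
  have hcross : E ^ α * (-ρ) ≤ c₁ ^ 2 / k * x ^ 2 + k / 4 * E ^ (1 + α) :=
    calc E ^ α * (-ρ) ≤ E ^ α * |ρ| := mul_le_mul_of_nonneg_left (neg_le_abs ρ) hEα0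
      _ ≤ c₁ * x * E ^ ((1 + α) / 2) := hρ
      _ ≤ c₁ ^ 2 / k * x ^ 2 + k / 4 * (E ^ ((1 + α) / 2)) ^ 2 := mul_le_div_mul_sq_add hk
      _ = c₁ ^ 2 / k * x ^ 2 + k / 4 * E ^ (1 + α) := by
          rw [← Real.rpow_mul_natCast hE.le]; ring_nf
  have hdissip : k * E ^ (1 + α) - k / 2 * E₀ ^ α * x ^ 2 ≤ E ^ α * s := by
    have h1 : E ^ (1 + α) = E ^ α * E := by rw [add_comm, Real.rpow_add hE, Real.rpow_one]
    have h2 := mul_le_mul_of_nonneg_left hs hEα0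
    have h3 := mul_le_mul_of_nonneg_left hEα (by positivity : 0 ≤ k / 2 * x ^ 2)
    rw [h1]; nlinarith
  have hsum : -x ^ 2 * α * E ^ (α - 1) * ρ + E ^ α * (x ^ 2 - ρ - s)
      ≤ (α * B + E₀ ^ α + c₁ ^ 2 / k + k / 2 * E₀ ^ α) * x ^ 2 - 3 * k / 4 * E ^ (1 + α) := by
    nlinarith [mul_le_mul_of_nonneg_right hEα hx2]
  nlinarith [mul_le_mul_of_nonneg_left hsum hε, mul_le_mul_of_nonneg_right hεB hx2]

theorem rpow_mul_le_of_le_mul_rpow {α c E y : ℝ} (hE : 0 < E) (h : y ≤ c * E ^ ((1 - α) / 2)) :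
    E ^ α * y ≤ c * E ^ ((1 + α) / 2) :=
  calc E ^ α * y ≤ E ^ α * (c * E ^ ((1 - α) / 2)) :=
        mul_le_mul_of_nonneg_left h (Real.rpow_nonneg hE.le _)
    _ = c * E ^ ((1 + α) / 2) := by rw [mul_left_comm, ← Real.rpow_add hE]; ring_nf

theorem mul_mul_rpow_le_mul_self {α c₁ E E₀ x : ℝ} (hα : 0 ≤ α) (hc₁ : 0 ≤ c₁) (hE : 0 < E)
    (hEE₀ : E ≤ E₀) (hx2 : x ^ 2 ≤ 2 * E) :
    c₁ * x * E ^ ((1 + α) / 2) ≤ √2 * c₁ * E₀ ^ (α / 2) * E := by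
  have hx : x ≤ √2 * E ^ (1 / 2 : ℝ) := by
    rw [← Real.sqrt_eq_rpow, ← Real.sqrt_mul zero_le_two]
    exact Real.le_sqrt_of_sq_le hx2
  have hexp : E ^ (1 / 2 : ℝ) * E ^ ((1 + α) / 2) = E ^ (α / 2) * E := by
    rw [← Real.rpow_add hE, ← Real.rpow_add_one hE.ne']; ring_nf
  calc c₁ * x * E ^ ((1 + α) / 2) ≤ c₁ * (√2 * E ^ (1 / 2 : ℝ)) * E ^ ((1 + α) / 2) := by
        gcongr
    _ = √2 * c₁ * E ^ (α / 2) * E := by rw [mul_assoc _ (E ^ (α / 2)), ← hexp]; ring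
    _ ≤ √2 * c₁ * E₀ ^ (α / 2) * E := by gcongr

/-- For small `ε > 0` the perturbed energy `Φ = E + ε E ^ α ρ` lies between `E / 2` and `3 E / 2`
and satisfies `Φ' ≤ -c Φ ^ (1 + α)`. -/
theorem exists_le_mul_one_add_rpow_of_dissipation_of_pos {E ρ x s : ℝ → ℝ} {α c₁ k : ℝ}
    (hα : 0 < α) (hc₁ : 0 ≤ c₁) (hk : 0 < k)
    (hE : ∀ t ∈ Ici (0 : ℝ), HasDerivWithinAt E (-x t ^ 2) (Ici 0) t)
    (hρ : ∀ t ∈ Ici (0 : ℝ), HasDerivWithinAt ρ (x t ^ 2 - ρ t - s t) (Ici 0) t)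
    (hpos : ∀ t ∈ Ici (0 : ℝ), 0 < E t) (hx2 : ∀ t ∈ Ici (0 : ℝ), x t ^ 2 ≤ 2 * E t)
    (hρx : ∀ t ∈ Ici (0 : ℝ), |ρ t| ≤ c₁ * x t * E t ^ ((1 - α) / 2))
    (hs : ∀ t ∈ Ici (0 : ℝ), k * (E t - x t ^ 2 / 2) ≤ s t) :
    ∃ C, ∀ t ∈ Ici (0 : ℝ), E t ≤ C * (1 + t) ^ (-α⁻¹) := by
  have hEE₀ : ∀ t ∈ Ici (0 : ℝ), E t ≤ E 0 := fun t ht =>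
    antitoneOn_Ici_of_hasDerivWithinAt_nonpos hE (fun t _ => neg_nonpos.2 (sq_nonneg _))
      self_mem_Ici ht ht
  set B := √2 * c₁ * E 0 ^ (α / 2)
  set D := α * B + E 0 ^ α + c₁ ^ 2 / k + k / 2 * E 0 ^ α
  have hE₀ : 0 < E 0 := hpos 0 self_mem_Ici
  have hB : 0 ≤ B := by positivity
  have hD : 0 ≤ D := by positivity
  set ε := (D + 2 * B + 1)⁻¹
  have hε : 0 < ε := by positivity
  have hεD : ε * D ≤ 1 := by rw [inv_mul_le_iff₀ (by positivity)]; linarith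
  have hεB : ε * B ≤ 1 / 2 := by rw [inv_mul_le_iff₀ (by positivity)]; linarith
  have hρE' : ∀ t ∈ Ici (0 : ℝ), E t ^ α * |ρ t| ≤ c₁ * x t * E t ^ ((1 + α) / 2) :=
    fun t ht => rpow_mul_le_of_le_mul_rpow (hpos t ht) (hρx t ht)
  have hρE : ∀ t ∈ Ici (0 : ℝ), E t ^ α * |ρ t| ≤ B * E t := fun t ht =>
    (hρE' t ht).trans (mul_mul_rpow_le_mul_self hα.le hc₁ (hpos t ht) (hEE₀ t ht) (hx2 t ht))
  set Φ := fun t => E t + ε * (E t ^ α * ρ t)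
  have hΦE : ∀ t ∈ Ici (0 : ℝ), E t / 2 ≤ Φ t ∧ Φ t ≤ 3 / 2 * E t := by
    intro t ht
    have h : |ε * (E t ^ α * ρ t)| ≤ E t / 2 := by
      rw [abs_mul, abs_mul, abs_of_pos hε, abs_of_nonneg (Real.rpow_nonneg (hpos t ht).le _)]
      nlinarith [mul_le_mul_of_nonneg_left (hρE t ht) hε.le, hpos t ht]
    constructor <;> linarith [abs_le.1 h]
  have hΦ : ∀ t ∈ Ici (0 : ℝ), HasDerivWithinAt Φ
      (-x t ^ 2 + ε * (-x t ^ 2 * α * E t ^ (α - 1) * ρ t + E t ^ α * (x t ^ 2 - ρ t - s t)))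
      (Ici 0) t := fun t ht =>
    (hE t ht).add ((((hE t ht).rpow_const (Or.inl (hpos t ht).ne')).mul (hρ t ht)).const_mul ε)
  have hΦ' : ∀ t ∈ Ici (0 : ℝ),
      -x t ^ 2 + ε * (-x t ^ 2 * α * E t ^ (α - 1) * ρ t + E t ^ α * (x t ^ 2 - ρ t - s t))
        ≤ -(ε * (3 * k / 4) * (2 / 3) ^ (1 + α) * Φ t ^ (1 + α)) := by
    intro t ht
    have hΦE' : (2 / 3) ^ (1 + α) * Φ t ^ (1 + α) ≤ E t ^ (1 + α) := by
      rw [← Real.mul_rpow (by norm_num) (by linarith [hΦE t ht, hpos t ht])]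
      exact Real.rpow_le_rpow (by linarith [hΦE t ht, hpos t ht]) (by linarith [hΦE t ht])
        (by linarith)
    calc _ ≤ -(ε * (3 * k / 4)) * E t ^ (1 + α) :=
          perturbed_energy_deriv_le hα hk hε.le (hpos t ht) (hEE₀ t ht) (hρE' t ht) (hρE t ht)
            (hs t ht) hεD
      _ ≤ -(ε * (3 * k / 4) * (2 / 3) ^ (1 + α) * Φ t ^ (1 + α)) := by
          nlinarith [mul_le_mul_of_nonneg_left hΦE' (by positivity : 0 ≤ ε * (3 * k / 4))]
  obtain ⟨C, hC⟩ := exists_le_mul_one_add_rpow_of_hasDerivWithinAt_le (by positivity) hα hΦ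
    (fun t ht => by linarith [hΦE t ht, hpos t ht]) hΦ'
  exact ⟨2 * C, fun t ht => by linarith [hΦE t ht, hC t ht]⟩

theorem exists_le_mul_one_add_rpow_of_dissipation {E ρ x s : ℝ → ℝ} {α c₁ k : ℝ}
    (hα : 0 < α) (hc₁ : 0 ≤ c₁) (hk : 0 < k)
    (hE : ∀ t ∈ Ici (0 : ℝ), HasDerivWithinAt E (-x t ^ 2) (Ici 0) t)
    (hρ : ∀ t ∈ Ici (0 : ℝ), HasDerivWithinAt ρ (x t ^ 2 - ρ t - s t) (Ici 0) t)
    (hx2 : ∀ t ∈ Ici (0 : ℝ), x t ^ 2 ≤ 2 * E t)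
    (hρx : ∀ t ∈ Ici (0 : ℝ), |ρ t| ≤ c₁ * x t * E t ^ ((1 - α) / 2))
    (hs : ∀ t ∈ Ici (0 : ℝ), k * (E t - x t ^ 2 / 2) ≤ s t) :
    ∃ C, ∀ t ∈ Ici (0 : ℝ), E t ≤ C * (1 + t) ^ (-α⁻¹) := by
  by_cases hpos : ∀ t ∈ Ici (0 : ℝ), 0 < E t
  · exact exists_le_mul_one_add_rpow_of_dissipation_of_pos hα hc₁ hk hE hρ hpos hx2 hρx hs
  push Not at hpos
  obtain ⟨t₀, ht₀, hEt₀⟩ := hpos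
  exact (antitoneOn_Ici_of_hasDerivWithinAt_nonpos hE fun t _ => neg_nonpos.2 (sq_nonneg _)
    ).exists_le_mul_one_add_rpow_of_nonpos ht₀ hEt₀ (by positivity)

section Trajectory

variable {H : Type*} [NormedAddCommGroup H] [InnerProductSpace ℝ H]
  {A : H →L[ℝ] H} {F : H → ℝ} {F' : H → H}

noncomputable def energy (A : H →L[ℝ] H) (F : H → ℝ) (x y : H) : ℝ :=
  (‖y‖ ^ 2 + ⟪A x, x⟫) / 2 + F x

theorem norm_sq_add_le_two_mul_energy (hFpos : ∀ x, 0 ≤ F x) (x y : H) :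
    ‖y‖ ^ 2 + ⟪A x, x⟫ + F x ≤ 2 * energy A F x y := by
  unfold energy; linarith [hFpos x]

theorem energy_nonneg (hApos : ∀ x, 0 ≤ ⟪A x, x⟫) (hFpos : ∀ x, 0 ≤ F x) (x y : H) :
    0 ≤ energy A F x y := by
  unfold energy; positivity [hApos x, hFpos x]

theorem min_one_mul_energy_sub_le {K : ℝ} (hApos : ∀ x, 0 ≤ ⟪A x, x⟫) (hFpos : ∀ x, 0 ≤ F x)
    (hKF : ∀ x, K * F x ≤ ⟪F' x, x⟫) (x y : H) :
    min 1 K * (energy A F x y - ‖y‖ ^ 2 / 2) ≤ ⟪A x, x⟫ + ⟪F' x, x⟫ := by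
  have h1 := mul_le_mul_of_nonneg_right (min_le_left 1 K) (hApos x)
  have h2 := mul_le_mul_of_nonneg_right (min_le_right 1 K) (hFpos x)
  unfold energy
  nlinarith [hKF x, hApos x]

structure IsDampedSolution (A : H →L[ℝ] H) (F' : H → H) (u v w : ℝ → H) : Prop where
  hasDerivWithinAt_position : ∀ t ∈ Ici (0 : ℝ), HasDerivWithinAt u (v t) (Ici 0) t
  hasDerivWithinAt_velocity : ∀ t ∈ Ici (0 : ℝ), HasDerivWithinAt v (w t) (Ici 0) t
  eq_zero : ∀ t ∈ Ici (0 : ℝ), w t + v t + A (u t) + F' (u t) = 0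

namespace IsDampedSolution

variable {u v w : ℝ → H}

theorem acceleration_eq (hs : IsDampedSolution A F' u v w) {t : ℝ} (ht : t ∈ Ici 0) :
    w t = -(v t + A (u t) + F' (u t)) :=
  eq_neg_of_add_eq_zero_left (by rw [← hs.eq_zero t ht]; abel)

theorem hasDerivWithinAt_energy [CompleteSpace H] (hs : IsDampedSolution A F' u v w)
    (hA : IsSelfAdjoint A) (hF : ∀ x, HasGradientAt F (F' x) x) {t : ℝ} (ht : t ∈ Ici 0) :
    HasDerivWithinAt (fun t => energy A F (u t) (v t)) (-‖v t‖ ^ 2) (Ici 0) t := by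
  have hu := hs.hasDerivWithinAt_position t ht
  have hAu : HasDerivWithinAt (fun t => A (u t)) (A (v t)) (Ici 0) t :=
    A.hasFDerivAt.comp_hasDerivWithinAt t hu
  have hFu : HasDerivWithinAt (fun t => F (u t)) ⟪F' (u t), v t⟫ (Ici 0) t :=
    (hF (u t)).hasFDerivAt.comp_hasDerivWithinAt t hu
  refine ((((hs.hasDerivWithinAt_velocity t ht).norm_sq.add (hAu.inner ℝ hu)).div_const 2).add
    hFu).congr_deriv ?_
  rw [hs.acceleration_eq ht, show ⟪A (v t), u t⟫ = ⟪v t, A (u t)⟫ from hA.isSymmetric _ _,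
    real_inner_comm (v t) (A (u t)),
    real_inner_comm (v t) (F' (u t))]
  simp only [inner_neg_right, inner_add_right, real_inner_self_eq_norm_sq]
  ring

theorem hasDerivWithinAt_inner (hs : IsDampedSolution A F' u v w) {t : ℝ} (ht : t ∈ Ici 0) :
    HasDerivWithinAt (fun t => ⟪v t, u t⟫)
      (‖v t‖ ^ 2 - ⟪v t, u t⟫ - (⟪A (u t), u t⟫ + ⟪F' (u t), u t⟫)) (Ici 0) t := by
  refine ((hs.hasDerivWithinAt_velocity t ht).inner ℝ
    (hs.hasDerivWithinAt_position t ht)).congr_deriv ?_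
  rw [hs.acceleration_eq ht, real_inner_self_eq_norm_sq]
  simp only [inner_neg_left, inner_add_left]
  ring

/-- The Lyapunov function `2 E + ⟪u', u⟫ + ‖u‖² / 2` is nonincreasing and dominates `‖u‖² / 4`. -/
theorem exists_norm_le [CompleteSpace H] (hs : IsDampedSolution A F' u v w)
    (hA : IsSelfAdjoint A) (hApos : ∀ x, 0 ≤ ⟪A x, x⟫) (hFpos : ∀ x, 0 ≤ F x)
    (hF : ∀ x, HasGradientAt F (F' x) x) (hF'pos : ∀ x, 0 ≤ ⟪F' x, x⟫) :
    ∃ r, ∀ t ∈ Ici (0 : ℝ), ‖u t‖ ≤ r := by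
  set L := fun t => 2 * energy A F (u t) (v t) + ⟪v t, u t⟫ + ‖u t‖ ^ 2 / 2
  have hL : AntitoneOn L (Ici 0) := by
    refine antitoneOn_Ici_of_hasDerivWithinAt_nonpos (fun t ht =>
      (((hs.hasDerivWithinAt_energy hA hF ht).const_mul 2).add (hs.hasDerivWithinAt_inner ht)).add
        ((hs.hasDerivWithinAt_position t ht).norm_sq.div_const 2)) fun t _ => ?_
    rw [real_inner_comm]
    nlinarith [hApos (u t), hF'pos (u t), sq_nonneg ‖v t‖]
  refine ⟨√(4 * L 0), fun t ht => Real.le_sqrt_of_sq_le ?_⟩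
  have hvu := neg_abs_le ⟪v t, u t⟫
  have := abs_real_inner_le_norm (v t) (u t)
  have := hL self_mem_Ici ht ht
  unfold L energy at *
  nlinarith [hApos (u t), hFpos (u t), sq_nonneg (‖v t‖ - ‖u t‖ / 2)]

theorem exists_norm_le_mul_energy_rpow [CompleteSpace H] (hs : IsDampedSolution A F' u v w)
    (hA : IsSelfAdjoint A) (hApos : ∀ x, 0 ≤ ⟪A x, x⟫) (hFpos : ∀ x, 0 ≤ F x)
    (hF : ∀ x, HasGradientAt F (F' x) x) (hF'pos : ∀ x, 0 ≤ ⟪F' x, x⟫) {γ : ℝ} (hγ : 0 < γ)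
    (hcoerc : ∀ B : Set H, Bornology.IsBounded B →
      ∃ R : ℝ, 0 ≤ R ∧ ∀ x ∈ B, ‖x‖ ^ γ ≤ R * (⟪A x, x⟫ + F x)) :
    ∃ c, 0 ≤ c ∧ ∀ t ∈ Ici (0 : ℝ), ‖u t‖ ≤ c * energy A F (u t) (v t) ^ γ⁻¹ := by
  obtain ⟨r, hr⟩ := hs.exists_norm_le hA hApos hFpos hF hF'pos
  obtain ⟨R, hR, hRu⟩ := hcoerc _ (Metric.isBounded_closedBall (x := 0) (r := r))
  refine ⟨(2 * R) ^ γ⁻¹, by positivity, fun t ht => ?_⟩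
  have hE := energy_nonneg hApos hFpos (u t) (v t)
  rw [← Real.mul_rpow (by positivity) hE,
    Real.le_rpow_inv_iff_of_pos (norm_nonneg _) (by positivity) hγ]
  calc ‖u t‖ ^ γ ≤ R * (⟪A (u t), u t⟫ + F (u t)) :=
        hRu _ (mem_closedBall_zero_iff.2 (hr t ht))
    _ ≤ R * (2 * energy A F (u t) (v t)) := by
        gcongr; linarith [norm_sq_add_le_two_mul_energy (A := A) hFpos (u t) (v t), sq_nonneg ‖v t‖]
    _ = 2 * R * energy A F (u t) (v t) := by ring

theorem exists_energy_le_mul_one_add_rpow [CompleteSpace H] (hs : IsDampedSolution A F' u v w)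
    (hA : IsSelfAdjoint A) (hApos : ∀ x, 0 ≤ ⟪A x, x⟫) (hFpos : ∀ x, 0 ≤ F x)
    (hF : ∀ x, HasGradientAt F (F' x) x) {K : ℝ} (hK : 0 < K) (hKF : ∀ x, K * F x ≤ ⟪F' x, x⟫)
    {p c₁ : ℝ} (hp : 0 < p) (hc₁ : 0 ≤ c₁)
    (hu_le : ∀ t ∈ Ici (0 : ℝ), ‖u t‖ ≤ c₁ * energy A F (u t) (v t) ^ (p + 2)⁻¹) :
    ∃ C, ∀ t ∈ Ici (0 : ℝ), energy A F (u t) (v t) ≤ C * (1 + t) ^ (-(1 + 2 / p)) := by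
  have hexp : (1 - p / (p + 2)) / 2 = (p + 2)⁻¹ := by field_simp; ring
  rw [show 1 + 2 / p = (p / (p + 2))⁻¹ by field_simp]
  refine exists_le_mul_one_add_rpow_of_dissipation (ρ := fun t => ⟪v t, u t⟫)
    (s := fun t => ⟪A (u t), u t⟫ + ⟪F' (u t), u t⟫) (by positivity) hc₁ (lt_min one_pos hK)
    (fun t ht => hs.hasDerivWithinAt_energy hA hF ht) (fun t ht => hs.hasDerivWithinAt_inner ht)
    (fun t _ => ?_) (fun t ht => ?_) fun t _ => min_one_mul_energy_sub_le hApos hFpos hKF _ _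
  · linarith [norm_sq_add_le_two_mul_energy (A := A) hFpos (u t) (v t), hApos (u t), hFpos (u t)]
  rw [hexp]
  calc |⟪v t, u t⟫| ≤ ‖v t‖ * ‖u t‖ := abs_real_inner_le_norm _ _
    _ ≤ ‖v t‖ * (c₁ * energy A F (u t) (v t) ^ (p + 2)⁻¹) := by gcongr; exact hu_le t ht
    _ = _ := by ring

end IsDampedSolution

end Trajectory

theorem stmt_3_general
    {H : Type*} [NormedAddCommGroup H] [InnerProductSpace ℝ H] [CompleteSpace H]
    (A : H →L[ℝ] H) (hA : IsSelfAdjoint A) (hApos : ∀ u : H, 0 ≤ ⟪A u, u⟫)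
    (F : H → ℝ) (F' : H → H)
    (hFpos : ∀ u : H, 0 ≤ F u)
    (hF : ∀ u : H, HasGradientAt F (F' u) u)
    (K : ℝ) (hK : 0 < K) (hKF : ∀ u : H, K * F u ≤ ⟪F' u, u⟫)
    (p : ℝ) (hp : 0 < p)
    (hcoerc : ∀ B : Set H, Bornology.IsBounded B →
      ∃ R : ℝ, 0 ≤ R ∧ ∀ u ∈ B, ‖u‖ ^ (p + 2) ≤ R * (⟪A u, u⟫ + F u))
    (u v w : ℝ → H)
    (hu : ∀ t ∈ Set.Ici (0:ℝ), HasDerivWithinAt u (v t) (Set.Ici 0) t)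
    (hv : ∀ t ∈ Set.Ici (0:ℝ), HasDerivWithinAt v (w t) (Set.Ici 0) t)
    (heq : ∀ t ∈ Set.Ici (0:ℝ), w t + v t + A (u t) + F' (u t) = 0) :
    ∃ M₁ M₂ : ℝ, ∀ t ∈ Set.Ici (0:ℝ),
      ‖v t‖^2 + ⟪A (u t), u t⟫ + F (u t) ≤ M₁ * (1 + t) ^ (-(1 + 2/p)) ∧
      ‖u t‖ ≤ M₂ * (1 + t) ^ (-(1/p)) := by
  have hs : IsDampedSolution A F' u v w := ⟨hu, hv, heq⟩
  have hF'pos : ∀ x, 0 ≤ ⟪F' x, x⟫ := fun x => (mul_nonneg hK.le (hFpos x)).trans (hKF x)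
  have hE := energy_nonneg hApos hFpos
  obtain ⟨c₁, hc₁, hu_le⟩ :=
    hs.exists_norm_le_mul_energy_rpow hA hApos hFpos hF hF'pos (by positivity) hcoerc
  obtain ⟨C, hC⟩ := hs.exists_energy_le_mul_one_add_rpow hA hApos hFpos hF hK hKF hp hc₁ hu_le
  have hC0 : 0 ≤ C := by simpa using (hE (u 0) (v 0)).trans (hC 0 self_mem_Ici)
  refine ⟨2 * C, c₁ * C ^ (p + 2)⁻¹, fun t ht => ⟨?_, ?_⟩⟩
  · linarith [norm_sq_add_le_two_mul_energy (A := A) hFpos (u t) (v t), hC t ht]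
  calc ‖u t‖ ≤ c₁ * energy A F (u t) (v t) ^ (p + 2)⁻¹ := hu_le t ht
    _ ≤ c₁ * (C * (1 + t) ^ (-(1 + 2 / p))) ^ (p + 2)⁻¹ := by
        gcongr; exacts [hE _ _, hC t ht]
    _ = c₁ * C ^ (p + 2)⁻¹ * (1 + t) ^ (-(1 / p)) := by
        have ht0 : (0 : ℝ) ≤ 1 + t := by linarith [ht.out]
        rw [Real.mul_rpow hC0 (Real.rpow_nonneg ht0 _), ← Real.rpow_mul ht0]
        field_simp

/-- Upper decay estimate: under hypotheses (Hp1)-(Hp6), every twice continuously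
differentiable solution of `u'' + u' + A u + ∇F(u) = 0` on `[0,∞)` satisfies
`‖u'(t)‖² + ⟨Au(t),u(t)⟩ + F(u(t)) ≤ M₁ (1+t)^{-(1+2/p)}` and `‖u(t)‖ ≤ M₂ (1+t)^{-1/p}`. -/
theorem stmt_3
    {H : Type*} [NormedAddCommGroup H] [InnerProductSpace ℝ H] [CompleteSpace H]
    (A : H →L[ℝ] H) (hA : IsSelfAdjoint A) (hApos : ∀ u : H, 0 ≤ ⟪A u, u⟫)
    (F : H → ℝ) (F' : H → H)
    (hFpos : ∀ u : H, 0 ≤ F u) (hF0 : F 0 = 0)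
    (hF : ∀ u : H, HasGradientAt F (F' u) u)
    (hFlip : ∀ s : Set H, Bornology.IsBounded s → ∃ L : ℝ≥0, LipschitzOnWith L F' s)
    (K : ℝ) (hK : 0 < K) (hKF : ∀ u : H, K * F u ≤ ⟪F' u, u⟫)
    (p : ℝ) (hp : 0 < p)
    (hcoerc : ∀ B : Set H, Bornology.IsBounded B →
      ∃ R : ℝ, 0 ≤ R ∧ ∀ u ∈ B, ‖u‖ ^ (p + 2) ≤ R * (⟪A u, u⟫ + F u))
    (u v w : ℝ → H)
    (hu : ∀ t ∈ Set.Ici (0:ℝ), HasDerivWithinAt u (v t) (Set.Ici 0) t)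
    (hv : ∀ t ∈ Set.Ici (0:ℝ), HasDerivWithinAt v (w t) (Set.Ici 0) t)
    (hw : ContinuousOn w (Set.Ici 0))
    (heq : ∀ t ∈ Set.Ici (0:ℝ), w t + v t + A (u t) + F' (u t) = 0) :
    ∃ M₁ M₂ : ℝ, ∀ t ∈ Set.Ici (0:ℝ),
      ‖v t‖^2 + ⟪A (u t), u t⟫ + F (u t) ≤ M₁ * (1 + t) ^ (-(1 + 2/p)) ∧
      ‖u t‖ ≤ M₂ * (1 + t) ^ (-(1/p)) :=
  stmt_3_general A hA hApos F F' hFpos hF K hK hKF p hp hcoerc u v w hu hv heq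
end

section
/- For every real p > 0 and all real numbers a and b: |(1/(p+2)) (|a+b|^{p+2} − |a|^{p+2}) − |a|^{p} a b| ≤ (p+1) · 2^{p−1} · (|a|^{p} + |b|^{p}) · b². -/
/-!
With `F(σ) = |σ|^{p+2}/(p+2)` we have `F'(σ) = |σ|^p σ` and `F''(σ) = (p+1)|σ|^p`, which is
continuous because `p > 0`. So `F'` is `(p+1)M^p`-Lipschitz on `[-M, M]` with `M = |a| + |b|`,
and the Taylor remainder `φ(t) = F(a+tb) - F(a) - F'(a) t b` satisfies `|φ'(t)| ≤ (p+1)M^p t b²`,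
whence `|φ(1)| ≤ (p+1)M^p b²/2`. Finally `M^p ≤ 2^p (|a|^p + |b|^p)`.
-/

open Real Set Filter Topology

theorem Real.add_rpow_le_two_rpow_mul_rpow_add_rpow {p x y : ℝ} (hx : 0 ≤ x) (hy : 0 ≤ y)
    (hp : 0 ≤ p) : (x + y) ^ p ≤ 2 ^ p * (x ^ p + y ^ p) := by
  have hmax : max x y ^ p ≤ x ^ p + y ^ p := by
    rcases le_total x y with h | h
    · rw [max_eq_right h]; linarith [rpow_nonneg hx p]
    · rw [max_eq_left h]; linarith [rpow_nonneg hy p]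
  calc (x + y) ^ p ≤ (2 * max x y) ^ p := by
        gcongr; rw [two_mul]; exact add_le_add (le_max_left x y) (le_max_right x y)
    _ = 2 ^ p * max x y ^ p := mul_rpow zero_le_two (le_max_of_le_left hx)
    _ ≤ 2 ^ p * (x ^ p + y ^ p) := by gcongr

theorem abs_rpow_add_two {p : ℝ} (hp : p + 2 ≠ 0) (x : ℝ) : |x| ^ (p + 2) = |x| ^ p * x ^ 2 := by
  rw [rpow_add' (abs_nonneg x) hp, rpow_two, sq_abs]

theorem hasDerivAt_abs_rpow_mul_self {p : ℝ} (hp : 0 < p) (x : ℝ) :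
    HasDerivAt (fun y => |y| ^ p * y) ((p + 1) * |x| ^ p) x := by
  rcases eq_or_ne x 0 with rfl | hx
  · have hslope : (fun y : ℝ => |y| ^ p) =ᶠ[𝓝[≠] 0] slope (fun y => |y| ^ p * y) 0 := by
      filter_upwards [self_mem_nhdsWithin] with y (hy : y ≠ 0)
      simp [slope_def_field, hy]
    have hlim : Tendsto (fun y : ℝ => |y| ^ p) (𝓝[≠] 0) (𝓝 ((p + 1) * |0| ^ p)) := by
      convert ((continuous_abs.rpow_const fun _ => Or.inr hp.le).tendsto 0).mono_left
        nhdsWithin_le_nhds using 2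
      simp [zero_rpow hp.ne']
    exact hasDerivAt_iff_tendsto_slope.2 (hlim.congr' hslope)
  · -- away from `0`, `|y|^p y = |y|^{p+2} / y` and the numerator is a known derivative
    have hquot := (hasDerivAt_abs_rpow x (p := p + 2) (by linarith)).fun_div (hasDerivAt_id' x) hx
    have heq : (fun y : ℝ => |y| ^ (p + 2) / y) =ᶠ[𝓝 x] fun y => |y| ^ p * y := by
      filter_upwards [eventually_ne_nhds hx] with y hy
      rw [abs_rpow_add_two (by positivity)]
      field_simp
    refine (hquot.congr_of_eventuallyEq heq.symm).congr_deriv ?_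
    rw [abs_rpow_add_two (by positivity), add_sub_cancel_right]
    field_simp
    ring

theorem abs_abs_rpow_mul_self_sub_le {p M u v : ℝ} (hp : 0 < p) (hu : |u| ≤ M) (hv : |v| ≤ M) :
    |(|u| ^ p * u) - |v| ^ p * v| ≤ (p + 1) * M ^ p * |u - v| := by
  have hderiv : ∀ x ∈ Icc (-M) M, ‖(p + 1) * |x| ^ p‖ ≤ (p + 1) * M ^ p := by
    intro x hx
    rw [norm_of_nonneg (by positivity)]
    gcongr
    exact abs_le.2 hx
  exact (convex_Icc (-M) M).norm_image_sub_le_of_norm_hasDerivWithin_le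
    (fun x _ => (hasDerivAt_abs_rpow_mul_self hp x).hasDerivWithinAt) hderiv
    (abs_le.1 hv) (abs_le.1 hu)

theorem abs_rpow_add_two_taylor_remainder_le {p : ℝ} (hp : 0 < p) (a b : ℝ) :
    |(1/(p + 2)) * (|a + b| ^ (p + 2) - |a| ^ (p + 2)) - |a| ^ p * a * b| ≤
      (p + 1) * (|a| + |b|) ^ p * b ^ 2 / 2 := by
  set C := (p + 1) * (|a| + |b|) ^ p
  let φ : ℝ → ℝ := fun t =>
    (1/(p + 2)) * (|a + t * b| ^ (p + 2) - |a| ^ (p + 2)) - |a| ^ p * a * (t * b)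
  have hφ : ∀ t, HasDerivAt φ ((|a + t * b| ^ p * (a + t * b) - |a| ^ p * a) * b) t := by
    intro t
    have hline : HasDerivAt (fun t => a + t * b) b t := by
      simpa using ((hasDerivAt_id t).mul_const b).const_add a
    have hpow := (hasDerivAt_abs_rpow (a + t * b) (p := p + 2) (by linarith)).comp t hline
    refine (((hpow.sub_const (|a| ^ (p + 2))).const_mul (1 / (p + 2))).sub
      ((hasDerivAt_mul_const b).const_mul (|a| ^ p * a))).congr_deriv ?_
    rw [add_sub_cancel_right]
    field_simp
  have hbound : ∀ t ∈ Ico (0 : ℝ) 1,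
      ‖(|a + t * b| ^ p * (a + t * b) - |a| ^ p * a) * b‖ ≤ C * b ^ 2 * t := by
    intro t ht
    have hat : |a + t * b| ≤ |a| + |b| := by
      calc |a + t * b| ≤ |a| + t * |b| := by
            simpa [abs_mul, abs_of_nonneg ht.1] using abs_add_le a (t * b)
        _ ≤ |a| + |b| := by gcongr; exact mul_le_of_le_one_left (abs_nonneg b) ht.2.le
    calc ‖(|a + t * b| ^ p * (a + t * b) - |a| ^ p * a) * b‖
        ≤ C * |a + t * b - a| * |b| := by
          rw [norm_mul, norm_eq_abs, norm_eq_abs]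
          gcongr
          exact abs_abs_rpow_mul_self_sub_le hp hat (le_add_of_nonneg_right (abs_nonneg b))
      _ = C * b ^ 2 * t := by
          rw [add_sub_cancel_left, abs_mul, abs_of_nonneg ht.1, ← sq_abs b]
          ring
  have hB : ∀ t, HasDerivAt (fun t => C * b ^ 2 * t ^ 2 / 2) (C * b ^ 2 * t) t := fun t =>
    (((hasDerivAt_pow 2 t).const_mul (C * b ^ 2)).div_const 2).congr_deriv (by ring)
  have hφ1 := image_norm_le_of_norm_deriv_right_le_deriv_boundary
    (fun t _ => (hφ t).continuousAt.continuousWithinAt) (fun t _ => (hφ t).hasDerivWithinAt)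
    (by simp [φ]) hB hbound (right_mem_Icc.2 zero_le_one)
  simpa [φ] using hφ1

/-- Second-order Taylor estimate for `σ ↦ |σ|^{p+2}`: for every `p > 0` and all reals `a, b`,
`|(1/(p+2))(|a+b|^{p+2} - |a|^{p+2}) - |a|^p a b| ≤ (p+1) 2^{p-1} (|a|^p + |b|^p) b²`. -/
theorem stmt_8 (p : ℝ) (hp : 0 < p) (a b : ℝ) :
    |(1/(p + 2)) * (|a + b| ^ (p + 2) - |a| ^ (p + 2)) - |a| ^ p * a * b| ≤
      (p + 1) * (2 : ℝ) ^ (p - 1) * (|a| ^ p + |b| ^ p) * b ^ 2 := by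
  calc _ ≤ (p + 1) * (|a| + |b|) ^ p * b ^ 2 / 2 := abs_rpow_add_two_taylor_remainder_le hp a b
    _ ≤ (p + 1) * (2 ^ p * (|a| ^ p + |b| ^ p)) * b ^ 2 / 2 := by
        gcongr
        exact add_rpow_le_two_rpow_mul_rpow_add_rpow (abs_nonneg a) (abs_nonneg b) hp.le
    _ = _ := by
        rw [rpow_sub two_pos, rpow_one]
        ring
end

section
/- Let H be a real Hilbert space, let K be a finite-dimensional subspace of H, and let M be a closed subspace of H such that M^⊥ ∩ K = {0}. Let P_K and P_M denote the orthogonal projections of H onto K and M respectively. Then there exists a constant C such that ‖u‖² ≤ C (‖P_M u‖² + ‖u − P_K u‖²) for every u ∈ H. -/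
/-!
Split `u = P_K u + (u - P_K u)` orthogonally. Since `M^⊥ ∩ K = 0`, the map `P_M` is injective on
the finite-dimensional space `K`, hence bounded below there: `‖k‖ ≤ c ‖P_M k‖`. As `P_M` is a
contraction, `‖P_M (P_K u)‖ ≤ ‖P_M u‖ + ‖u - P_K u‖`, which bounds `‖P_K u‖²` by
`2c² (‖P_M u‖² + ‖u - P_K u‖²)`.
-/

section OrthogonalSplitting

variable {H : Type*} [NormedAddCommGroup H] [InnerProductSpace ℝ H]

theorem norm_sq_eq_of_sub_mem_orthogonal {S : Submodule ℝ H} {x p : H}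
    (hp : p ∈ S) (hxp : x - p ∈ Sᗮ) : ‖x‖ ^ 2 = ‖p‖ ^ 2 + ‖x - p‖ ^ 2 := by
  have hsplit := norm_add_sq_eq_norm_sq_add_norm_sq_real
    (Submodule.inner_right_of_mem_orthogonal hp hxp)
  rw [add_sub_cancel] at hsplit
  simpa only [sq] using hsplit

theorem norm_le_of_sub_mem_orthogonal {S : Submodule ℝ H} {x p : H}
    (hp : p ∈ S) (hxp : x - p ∈ Sᗮ) : ‖p‖ ≤ ‖x‖ := by
  have hsplit := norm_sq_eq_of_sub_mem_orthogonal hp hxp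
  exact (sq_le_sq₀ (norm_nonneg p) (norm_nonneg x)).mp (by nlinarith [sq_nonneg ‖x - p‖])

end OrthogonalSplitting

theorem Submodule.exists_norm_le_mul_norm_of_ker_inf_eq_bot
    {E F : Type*} [NormedAddCommGroup E] [NormedSpace ℝ E] [NormedAddCommGroup F]
    [NormedSpace ℝ F] (K : Submodule ℝ E) [FiniteDimensional ℝ K] (T : E →ₗ[ℝ] F)
    (hT : LinearMap.ker T ⊓ K = ⊥) :
    ∃ c : ℝ, 0 ≤ c ∧ ∀ k ∈ K, ‖k‖ ≤ c * ‖T k‖ := by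
  have hker : LinearMap.ker (T.comp K.subtype) = ⊥ := by
    rw [LinearMap.ker_eq_bot']
    intro k hk
    have hmem : (k : E) ∈ LinearMap.ker T ⊓ K := ⟨hk, k.2⟩
    rw [hT] at hmem
    exact Subtype.ext hmem
  obtain ⟨c, -, hc⟩ := (T.comp K.subtype).exists_antilipschitzWith hker
  refine ⟨c, c.2, fun k hk => ?_⟩
  simpa using hc.le_mul_dist ⟨k, hk⟩ 0

theorem sq_le_two_mul_sq_mul_add_sq {a b c d : ℝ} (ha : 0 ≤ a) (h : a ≤ c * (b + d)) :
    a ^ 2 ≤ 2 * c ^ 2 * (b ^ 2 + d ^ 2) := by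
  have hsq : (b + d) ^ 2 ≤ 2 * (b ^ 2 + d ^ 2) := by nlinarith [sq_nonneg (b - d)]
  calc a ^ 2 ≤ (c * (b + d)) ^ 2 := pow_le_pow_left₀ ha h 2
    _ = c ^ 2 * (b + d) ^ 2 := by ring
    _ ≤ 2 * c ^ 2 * (b ^ 2 + d ^ 2) := by nlinarith [sq_nonneg c]

theorem stmt_11_general
    {H : Type*} [NormedAddCommGroup H] [InnerProductSpace ℝ H]
    (K M : Submodule ℝ H) [FiniteDimensional ℝ K]
    (hKM : Mᗮ ⊓ K = ⊥)
    (PK PM : H →L[ℝ] H)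
    (hPK : ∀ x : H, PK x ∈ K ∧ x - PK x ∈ Kᗮ)
    (hPM : ∀ x : H, PM x ∈ M ∧ x - PM x ∈ Mᗮ) :
    ∃ C : ℝ, ∀ u : H, ‖u‖^2 ≤ C * (‖PM u‖^2 + ‖u - PK u‖^2) := by
  have hker : LinearMap.ker PM.toLinearMap ⊓ K = ⊥ := by
    refine eq_bot_iff.mpr (le_trans (inf_le_inf_right K fun x hx => ?_) hKM.le)
    have hPMx : PM x = 0 := hx
    simpa [hPMx] using (hPM x).2
  obtain ⟨c, hc, hcoer⟩ := K.exists_norm_le_mul_norm_of_ker_inf_eq_bot PM.toLinearMap hker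
  refine ⟨2 * c ^ 2 + 1, fun u => ?_⟩
  have hPMPK : ‖PM (PK u)‖ ≤ ‖PM u‖ + ‖u - PK u‖ := by
    have hcontr := norm_le_of_sub_mem_orthogonal (hPM (u - PK u)).1 (hPM (u - PK u)).2
    calc ‖PM (PK u)‖ = ‖PM u - PM (u - PK u)‖ := by rw [← map_sub, sub_sub_cancel]
      _ ≤ ‖PM u‖ + ‖u - PK u‖ := (norm_sub_le _ _).trans (by gcongr)
  have hPKu : ‖PK u‖ ^ 2 ≤ 2 * c ^ 2 * (‖PM u‖ ^ 2 + ‖u - PK u‖ ^ 2) :=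
    sq_le_two_mul_sq_mul_add_sq (norm_nonneg _)
      ((hcoer _ (hPK u).1).trans (by gcongr; exact hPMPK))
  rw [norm_sq_eq_of_sub_mem_orthogonal (hPK u).1 (hPK u).2]
  nlinarith [sq_nonneg ‖PM u‖]

/-- If `K` is a finite-dimensional subspace and `M` a closed subspace with `M^⊥ ∩ K = {0}`,
then `‖u‖² ≤ C (‖P_M u‖² + ‖u - P_K u‖²)` for every `u ∈ H`. -/
theorem stmt_11
    {H : Type*} [NormedAddCommGroup H] [InnerProductSpace ℝ H] [CompleteSpace H]
    (K M : Submodule ℝ H) [FiniteDimensional ℝ K]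
    (hMclosed : IsClosed (M : Set H))
    (hKM : Mᗮ ⊓ K = ⊥)
    (PK PM : H →L[ℝ] H)
    (hPK : ∀ x : H, PK x ∈ K ∧ x - PK x ∈ Kᗮ)
    (hPM : ∀ x : H, PM x ∈ M ∧ x - PM x ∈ Mᗮ) :
    ∃ C : ℝ, ∀ u : H, ‖u‖^2 ≤ C * (‖PM u‖^2 + ‖u - PK u‖^2) :=
  stmt_11_general K M hKM PK PM hPK hPM
end

section
/- Let H be a real Hilbert space, let A : H → H be a bounded self-adjoint nonnegative linear operator whose kernel is finite-dimensional, let P denote the orthogonal projection onto ker A, and assume there is ν > 0 with ⟨A u, u⟩ ≥ ν ‖u − P u‖² for every u ∈ H. Let M be a closed subspace of H with M^⊥ ∩ ker A = {0}, let P_M be the orthogonal projection onto M, let p > 0, and define F(u) := (1/(p+2)) ‖P_M u‖^{p+2}. Then there exists a constant c such that ‖u‖^{p+2} ≤ c · (p + 2 + ⟨A u, u⟩^{p/2}) · (F(u) + ⟨A u, u⟩) for every u ∈ H. -/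
/-!
Split `u = P u + (u - P u)`. The coercivity of `A` controls `u - P u` by `⟨A u, u⟩`, and on the
finite-dimensional kernel of `A` the map `P_M` is injective (because `M^⊥ ∩ ker A = 0`), hence
bounded below; this gives `‖u‖² ≤ a ‖P_M u‖² + b ⟨A u, u⟩`. Raising it to the power `(p + 2)/2`
and using `(x + y)^q ≤ 2^(q-1) (x^q + y^q)` yields the claim.
-/

open scoped RealInnerProductSpace NNReal

lemma Real.rpow_add_le_mul_rpow_add_rpow {x y q : ℝ} (hx : 0 ≤ x) (hy : 0 ≤ y) (hq : 1 ≤ q) :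
    (x + y) ^ q ≤ 2 ^ (q - 1) * (x ^ q + y ^ q) := by
  lift x to ℝ≥0 using hx
  lift y to ℝ≥0 using hy
  exact_mod_cast NNReal.rpow_add_le_mul_rpow_add_rpow x y hq

lemma Real.rpow_add_two_le_of_sq_le {x m s a b p : ℝ} (hx : 0 ≤ x) (hm : 0 ≤ m) (hs : 0 ≤ s)
    (ha : 0 ≤ a) (hb : 0 ≤ b) (hp : 0 ≤ p) (h : x ^ 2 ≤ a * m ^ 2 + b * s) :
    x ^ (p + 2) ≤ 2 ^ (p / 2) * (a ^ ((p + 2) / 2) + b ^ ((p + 2) / 2)) *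
      (p + 2 + s ^ (p / 2)) * (1 / (p + 2) * m ^ (p + 2) + s) := by
  set q := (p + 2) / 2
  have hq : 1 ≤ q := by simp only [q]; linarith
  have pow_q : ∀ y : ℝ, 0 ≤ y → (y ^ 2) ^ q = y ^ (p + 2) := fun y hy => by
    rw [← Real.rpow_natCast, ← Real.rpow_mul hy]; congr 1; simp only [q]; push_cast; ring
  have hsq : s ^ q = s ^ (p / 2) * s := by
    rw [show q = p / 2 + 1 by simp only [q]; ring, Real.rpow_add_one' hs (by positivity)]
  set F := 1 / (p + 2) * m ^ (p + 2)
  set σ := s ^ (p / 2)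
  have hσ : 0 ≤ σ := by positivity
  have hF : 0 ≤ F := by positivity
  have hmF : m ^ (p + 2) ≤ (p + 2 + σ) * (F + s) := by
    have : m ^ (p + 2) = (p + 2) * F := by simp only [F]; field_simp
    rw [this]; nlinarith [mul_nonneg hσ hF, mul_nonneg hσ hs]
  have hsF : σ * s ≤ (p + 2 + σ) * (F + s) := by nlinarith [mul_nonneg hσ hF]
  calc x ^ (p + 2) = (x ^ 2) ^ q := (pow_q x hx).symm
    _ ≤ (a * m ^ 2 + b * s) ^ q := by gcongr
    _ ≤ 2 ^ (q - 1) * ((a * m ^ 2) ^ q + (b * s) ^ q) :=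
      Real.rpow_add_le_mul_rpow_add_rpow (by positivity) (by positivity) hq
    _ = 2 ^ (p / 2) * (a ^ q * m ^ (p + 2) + b ^ q * (σ * s)) := by
      rw [Real.mul_rpow ha (by positivity), Real.mul_rpow hb hs, pow_q m hm, hsq]
      congr 2; simp only [q]; ring
    _ ≤ 2 ^ (p / 2) * (a ^ q * ((p + 2 + σ) * (F + s)) + b ^ q * ((p + 2 + σ) * (F + s))) := by
      gcongr
    _ = _ := by ring

section

variable {H : Type*} [NormedAddCommGroup H] [InnerProductSpace ℝ H]

lemma norm_sq_eq_norm_sq_add_norm_sub_sq {K : Submodule ℝ H} {x y : H} (hy : y ∈ K)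
    (hxy : x - y ∈ Kᗮ) : ‖x‖ ^ 2 = ‖y‖ ^ 2 + ‖x - y‖ ^ 2 := by
  simpa [sq] using norm_add_sq_eq_norm_sq_add_norm_sq_real (K.inner_right_of_mem_orthogonal hy hxy)

lemma norm_le_norm_of_sub_mem_orthogonal {K : Submodule ℝ H} {x y : H} (hy : y ∈ K)
    (hxy : x - y ∈ Kᗮ) : ‖y‖ ≤ ‖x‖ := by
  have := norm_sq_eq_norm_sq_add_norm_sub_sq hy hxy
  nlinarith [norm_nonneg x, norm_nonneg y, sq_nonneg ‖x - y‖]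

lemma exists_norm_le_mul_norm_of_orthogonal_inf_eq_bot {M N : Submodule ℝ H}
    [FiniteDimensional ℝ N] (hMN : Mᗮ ⊓ N = ⊥) (PM : H →ₗ[ℝ] H) (hPM : ∀ x, x - PM x ∈ Mᗮ) :
    ∃ C : ℝ, 0 ≤ C ∧ ∀ v ∈ N, ‖v‖ ≤ C * ‖PM v‖ := by
  have hinj : LinearMap.ker (PM.comp N.subtype) = ⊥ := by
    rw [LinearMap.ker_eq_bot']
    intro v hv
    have hvM : (v : H) ∈ Mᗮ := by simpa [show PM v = 0 from hv] using hPM v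
    have : (v : H) ∈ Mᗮ ⊓ N := ⟨hvM, v.2⟩
    simpa [hMN] using this
  obtain ⟨K, -, hK⟩ := (PM.comp N.subtype).exists_antilipschitzWith hinj
  refine ⟨K, K.coe_nonneg, fun v hv => ?_⟩
  simpa [dist_eq_norm] using hK.le_mul_dist ⟨v, hv⟩ 0

lemma exists_norm_sq_le_of_coercive {M N : Submodule ℝ H} [FiniteDimensional ℝ N]
    (hMN : Mᗮ ⊓ N = ⊥) (P : H → H) (PM : H →ₗ[ℝ] H) (hP : ∀ x, P x ∈ N ∧ x - P x ∈ Nᗮ)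
    (hPM : ∀ x, PM x ∈ M ∧ x - PM x ∈ Mᗮ) (Q : H → ℝ) {ν : ℝ} (hν : 0 < ν)
    (hcoerc : ∀ u, ν * ‖u - P u‖ ^ 2 ≤ Q u) :
    ∃ a b : ℝ, 0 ≤ a ∧ 0 ≤ b ∧ ∀ u, ‖u‖ ^ 2 ≤ a * ‖PM u‖ ^ 2 + b * Q u := by
  obtain ⟨C, hC, hCN⟩ :=
    exists_norm_le_mul_norm_of_orthogonal_inf_eq_bot hMN PM fun x => (hPM x).2
  refine ⟨2 * C ^ 2, (2 * C ^ 2 + 1) / ν, by positivity, by positivity, fun u => ?_⟩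
  have hPu : ‖P u‖ ≤ C * (‖PM u‖ + ‖u - P u‖) := by
    have hPM_sub : ‖PM (u - P u)‖ ≤ ‖u - P u‖ :=
      norm_le_norm_of_sub_mem_orthogonal (hPM _).1 (hPM _).2
    calc ‖P u‖ ≤ C * ‖PM (P u)‖ := hCN _ (hP u).1
      _ = C * ‖PM u - PM (u - P u)‖ := by rw [map_sub, sub_sub_cancel]
      _ ≤ C * (‖PM u‖ + ‖u - P u‖) := by gcongr; exact (norm_sub_le _ _).trans (by gcongr)
  have hPu_sq : ‖P u‖ ^ 2 ≤ 2 * C ^ 2 * ‖PM u‖ ^ 2 + 2 * C ^ 2 * ‖u - P u‖ ^ 2 := by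
    nlinarith [norm_nonneg (P u), sq_nonneg (‖PM u‖ - ‖u - P u‖), mul_nonneg hC (norm_nonneg (PM u))]
  have hQ : (2 * C ^ 2 + 1) * ‖u - P u‖ ^ 2 ≤ (2 * C ^ 2 + 1) / ν * Q u := by
    rw [div_mul_eq_mul_div, le_div_iff₀ hν]
    nlinarith [mul_le_mul_of_nonneg_left (hcoerc u) (by positivity : (0 : ℝ) ≤ 2 * C ^ 2 + 1)]
  rw [norm_sq_eq_norm_sq_add_norm_sub_sq (hP u).1 (hP u).2]
  linarith

end

theorem stmt_13_general
    {H : Type*} [NormedAddCommGroup H] [InnerProductSpace ℝ H]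
    (A : H →L[ℝ] H) (hApos : ∀ u : H, 0 ≤ ⟪A u, u⟫)
    [FiniteDimensional ℝ (LinearMap.ker (A : H →ₗ[ℝ] H))]
    (P : H →L[ℝ] H)
    (hP : ∀ x : H, P x ∈ LinearMap.ker (A : H →ₗ[ℝ] H) ∧ x - P x ∈ (LinearMap.ker (A : H →ₗ[ℝ] H))ᗮ)
    (ν : ℝ) (hν : 0 < ν)
    (hcoerc : ∀ u : H, ν * ‖u - P u‖^2 ≤ ⟪A u, u⟫)
    (M : Submodule ℝ H)
    (hKM : Mᗮ ⊓ LinearMap.ker (A : H →ₗ[ℝ] H) = ⊥)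
    (PM : H →L[ℝ] H)
    (hPM : ∀ x : H, PM x ∈ M ∧ x - PM x ∈ Mᗮ)
    (p : ℝ) (hp : 0 < p) :
    ∃ c : ℝ, ∀ u : H,
      ‖u‖ ^ (p + 2) ≤
        c * (p + 2 + (⟪A u, u⟫) ^ (p/2)) *
          ((1/(p + 2)) * ‖PM u‖ ^ (p + 2) + ⟪A u, u⟫) := by
  obtain ⟨a, b, ha, hb, hab⟩ := exists_norm_sq_le_of_coercive hKM P (PM : H →ₗ[ℝ] H) hP hPM
    (fun u => ⟪A u, u⟫) hν hcoerc
  exact ⟨_, fun u => Real.rpow_add_two_le_of_sq_le (norm_nonneg u) (norm_nonneg (PM u))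
    (hApos u) ha hb hp.le (hab u)⟩

/-- Verification of hypothesis (Hp6) for the nonlocal projection nonlinearity: with
`F(u) = (1/(p+2))‖P_M u‖^{p+2}`, there is `c` such that
`‖u‖^{p+2} ≤ c (p + 2 + ⟨Au,u⟩^{p/2})(F(u) + ⟨Au,u⟩)` for every `u`. -/
theorem stmt_13
    {H : Type*} [NormedAddCommGroup H] [InnerProductSpace ℝ H] [CompleteSpace H]
    (A : H →L[ℝ] H) (hA : IsSelfAdjoint A) (hApos : ∀ u : H, 0 ≤ ⟪A u, u⟫)
    [FiniteDimensional ℝ (LinearMap.ker (A : H →ₗ[ℝ] H))]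
    (P : H →L[ℝ] H)
    (hP : ∀ x : H, P x ∈ LinearMap.ker (A : H →ₗ[ℝ] H) ∧ x - P x ∈ (LinearMap.ker (A : H →ₗ[ℝ] H))ᗮ)
    (ν : ℝ) (hν : 0 < ν)
    (hcoerc : ∀ u : H, ν * ‖u - P u‖^2 ≤ ⟪A u, u⟫)
    (M : Submodule ℝ H) (hMclosed : IsClosed (M : Set H))
    (hKM : Mᗮ ⊓ LinearMap.ker (A : H →ₗ[ℝ] H) = ⊥)
    (PM : H →L[ℝ] H)
    (hPM : ∀ x : H, PM x ∈ M ∧ x - PM x ∈ Mᗮ)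
    (p : ℝ) (hp : 0 < p) :
    ∃ c : ℝ, ∀ u : H,
      ‖u‖ ^ (p + 2) ≤
        c * (p + 2 + (⟪A u, u⟫) ^ (p/2)) *
          ((1/(p + 2)) * ‖PM u‖ ^ (p + 2) + ⟪A u, u⟫) :=
  stmt_13_general A hApos P hP ν hν hcoerc M hKM PM hPM p hp
end
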